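/- arXiv:2106.07119 — 2 statements merged into one kernel-verified Lean document; each statement's English description precedes it below -/
import Mathlib

section
/- Consider the 2D lattice Kuramoto model with nearest neighbor coupling (r = 1) and the (q1,q2)-twisted state, where |q1|, |q2| ≤ ⌊L/2⌋. If 4·max{|q1|, |q2|} > L, then the Jacobian matrix J at the twisted state has a positive eigenvalue; equivalently, there exists x ∈ ℝⁿ with xᵀ J x > 0 (so the twisted state is linearly unstable). -/
noncomputable section
open Real Finset Matrix

/-- Toroidal squared distance on the 2D lattice `(ZMod L)²`. -/
def torDist2 (L : ℕ) (x y : ZMod L × ZMod L) : ℕ :=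
  (min ((x.1.val : ℤ) - (y.1.val : ℤ)).natAbs
      (L - ((x.1.val : ℤ) - (y.1.val : ℤ)).natAbs)) ^ 2
  + (min ((x.2.val : ℤ) - (y.2.val : ℤ)).natAbs
      (L - ((x.2.val : ℤ) - (y.2.val : ℤ)).natAbs)) ^ 2

/-- Adjacency with (integer) squared coupling range `r2`:
`A(x,y) = 1` iff `0 < d(x,y) ≤ r2`, else `0`. -/
def adjN2 (L r2 : ℕ) (x y : ZMod L × ZMod L) : ℝ :=
  if 0 < torDist2 L x y ∧ torDist2 L x y ≤ r2 then 1 else 0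

/-- The `(q1,q2)`-twisted state `θ_{i,j} = 2π q1 i / L + 2π q2 j / L + C`. -/
def twisted2 (L : ℕ) (q1 q2 : ℤ) (C : ℝ) (x : ZMod L × ZMod L) : ℝ :=
  2 * π * q1 * x.1.val / L + 2 * π * q2 * x.2.val / L + C

/-- The Jacobian of the 2D lattice Kuramoto model (squared range `r2`) at a configuration `u`. -/
def jac2 (L : ℕ) [NeZero L] (r2 : ℕ) (u : ZMod L × ZMod L → ℝ) :
    Matrix (ZMod L × ZMod L) (ZMod L × ZMod L) ℝ :=
  fun x y =>
    if x = y then -∑ z, adjN2 L r2 x z * Real.cos (u z - u x)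
    else adjN2 L r2 x y * Real.cos (u y - u x)

/-!
Let `x` be the indicator of the column `S = {i = 0}`. The Jacobian is `W - D` with `W` the
coupling weights and `D` their row sums, so `xᵀ J x = -∑_{a ∈ S, b ∉ S} W a b`. For `r = 1` the
only edges leaving `S` join it to the neighbouring columns, and all of them carry the weight
`cos (2π q1 / L)`, which is negative once `L / 4 < |q1| ≤ L / 2`. Hence `xᵀ J x > 0`, and the
symmetric matrix `J` has a positive eigenvalue. Swapping the two lattice axes reduces the case
`|q1| ≤ |q2|` to this one.
-/

theorem Matrix.IsHermitian.exists_hasEigenvalue_pos_of_dotProduct_mulVec_pos {n : Type*}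
    [Fintype n] [DecidableEq n] {A : Matrix n n ℝ} (hA : A.IsHermitian) {x : n → ℝ}
    (hx : 0 < x ⬝ᵥ A *ᵥ x) : ∃ μ : ℝ, 0 < μ ∧ Module.End.HasEigenvalue (toLin' A) μ := by
  by_contra! hnonpos
  have hpsd : (-A).PosSemidef := by
    refine hA.neg.posSemidef_iff_eigenvalues_nonneg.mpr fun i => ?_
    have hmem := hA.neg.eigenvalues_mem_spectrum_real i
    rw [← spectrum.neg_eq, Set.mem_neg, ← spectrum_toLin',
      ← Module.End.hasEigenvalue_iff_mem_spectrum] at hmem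
    exact neg_nonpos.mp (not_lt.mp fun hpos => hnonpos _ hpos hmem)
  have hle := hpsd.dotProduct_mulVec_nonneg x
  rw [star_trivial, neg_mulVec, dotProduct_neg, neg_nonneg] at hle
  exact hle.not_gt hx

theorem dotProduct_mulVec_indicator_eq_neg_cut {n R : Type*} [Fintype n] [DecidableEq n]
    [CommRing R] (w : n → n → R) (S : Finset n) :
    (fun a => if a ∈ S then 1 else 0) ⬝ᵥ
        (of w - diagonal fun a => ∑ b, w a b) *ᵥ (fun a => if a ∈ S then 1 else 0) =
      -∑ a ∈ S, ∑ b ∈ Sᶜ, w a b := by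
  simp only [dotProduct, mulVec, ite_mul, mul_ite, one_mul, zero_mul, mul_one, mul_zero,
    sum_ite_mem, univ_inter, Matrix.sub_apply, of_apply, diagonal_apply, sum_sub_distrib,
    sum_ite_eq, inter_self]
  simp only [← sum_add_sum_compl S (w _)]
  rw [sum_add_distrib]
  ring

theorem cos_two_pi_mul_int_mul_div_of_natAbs {L : ℕ} (hL : L ≠ 0) (q k : ℤ)
    (hk : k.natAbs = 1 ∨ k.natAbs = L - 1) :
    cos (2 * π * q * k / (L : ℝ)) = cos (2 * π * q / (L : ℝ)) := by
  have hcos_abs : cos (2 * π * q * k / (L : ℝ)) = cos (2 * π * q * k.natAbs / (L : ℝ)) := by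
    rw [Nat.cast_natAbs, Int.cast_abs]
    rcases abs_choice (k : ℝ) with hk' | hk' <;> rw [hk']
    rw [← cos_neg]
    ring_nf
  rw [hcos_abs]
  rcases hk with hk | hk
  · rw [hk, Nat.cast_one, mul_one]
  · have hL' : (L : ℝ) ≠ 0 := Nat.cast_ne_zero.mpr hL
    have harg : 2 * π * q * ((L - 1 : ℕ) : ℝ) / L = q * (2 * π) - 2 * π * q / L := by
      rw [Nat.cast_pred (Nat.pos_of_ne_zero hL)]
      field_simp
    rw [hk, harg, cos_int_mul_two_pi_sub]

theorem cos_two_pi_mul_div_neg {L : ℕ} {q : ℤ} (hq : 2 * |q| ≤ L) (h : L < 4 * |q|) :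
    cos (2 * π * q / (L : ℝ)) < 0 := by
  have hL : (0 : ℝ) < L := by
    have : (0 : ℤ) < L := by linarith [abs_nonneg q]
    exact_mod_cast this
  have hqR : 2 * |(q : ℝ)| ≤ L := by exact_mod_cast hq
  have hR : (L : ℝ) < 4 * |(q : ℝ)| := by exact_mod_cast h
  rw [← cos_abs, abs_div, abs_mul, abs_of_pos (by positivity : 0 < 2 * π), Nat.abs_cast]
  apply cos_neg_of_pi_div_two_lt_of_lt
  · rw [lt_div_iff₀ hL]; nlinarith [pi_pos]
  · rw [div_lt_iff₀ hL]; nlinarith [pi_pos]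

theorem torDist2_self (L : ℕ) (a : ZMod L × ZMod L) : torDist2 L a a = 0 := by
  simp [torDist2]

theorem torDist2_comm (L : ℕ) (a b : ZMod L × ZMod L) : torDist2 L a b = torDist2 L b a := by
  simp only [torDist2, ← Int.natAbs_neg ((a.1.val : ℤ) - b.1.val),
    ← Int.natAbs_neg ((a.2.val : ℤ) - b.2.val), neg_sub]

theorem torDist2_swap (L : ℕ) (a b : ZMod L × ZMod L) :
    torDist2 L a.swap b.swap = torDist2 L a b := by
  simp only [torDist2, Prod.fst_swap, Prod.snd_swap]
  ring

theorem torDist2_eq_one_of_fst_ne {L : ℕ} [NeZero L] {a b : ZMod L × ZMod L}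
    (h : torDist2 L a b = 1) (hne : a.1 ≠ b.1) :
    a.2 = b.2 ∧ (((a.1.val : ℤ) - b.1.val).natAbs = 1 ∨
      ((a.1.val : ℤ) - b.1.val).natAbs = L - 1) := by
  have ha1 := a.1.val_lt
  have hb1 := b.1.val_lt
  have ha2 := a.2.val_lt
  have hb2 := b.2.val_lt
  have hval : a.1.val ≠ b.1.val := fun hv => hne (ZMod.val_injective L hv)
  unfold torDist2 at h
  generalize hm1 : min ((a.1.val : ℤ) - b.1.val).natAbs
    (L - ((a.1.val : ℤ) - b.1.val).natAbs) = m1 at h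
  generalize hm2 : min ((a.2.val : ℤ) - b.2.val).natAbs
    (L - ((a.2.val : ℤ) - b.2.val).natAbs) = m2 at h
  have hm1pos : 1 ≤ m1 := by omega
  have hm : m1 = 1 ∧ m2 = 0 := by
    have : m1 ^ 2 ≤ 1 := by omega
    have : m1 ≤ 1 := by nlinarith
    constructor <;> nlinarith
  exact ⟨ZMod.val_injective L (by omega), by omega⟩

theorem adjN2_self (L r2 : ℕ) (a : ZMod L × ZMod L) : adjN2 L r2 a a = 0 := by
  simp [adjN2, torDist2_self]

theorem adjN2_comm (L r2 : ℕ) (a b : ZMod L × ZMod L) : adjN2 L r2 a b = adjN2 L r2 b a := by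
  simp only [adjN2, torDist2_comm L a b]

theorem adjN2_swap (L r2 : ℕ) (a b : ZMod L × ZMod L) :
    adjN2 L r2 a.swap b.swap = adjN2 L r2 a b := by
  simp only [adjN2, torDist2_swap]

theorem adjN2_nonneg (L r2 : ℕ) (a b : ZMod L × ZMod L) : 0 ≤ adjN2 L r2 a b := by
  unfold adjN2
  split_ifs <;> norm_num

theorem adjN2_one_eq_zero_of_torDist2_ne_one {L : ℕ} {a b : ZMod L × ZMod L}
    (h : torDist2 L a b ≠ 1) : adjN2 L 1 a b = 0 :=
  if_neg (by omega)

theorem adjN2_one_zero_one {L : ℕ} (hL : 2 ≤ L) : adjN2 L 1 (0, 0) (1, 0) = 1 := by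
  have hdist : torDist2 L (0, 0) (1, 0) = 1 := by
    simp [torDist2, ZMod.val_one'' (show L ≠ 1 by omega)]
    omega
  rw [adjN2, if_pos (by omega)]

theorem twisted2_comp_swap (L : ℕ) (q1 q2 : ℤ) (C : ℝ) :
    twisted2 L q1 q2 C ∘ Prod.swap = twisted2 L q2 q1 C := by
  funext a
  simp only [Function.comp_apply, twisted2, Prod.fst_swap, Prod.snd_swap]
  ring

theorem cos_twisted2_sub_of_torDist2_eq_one {L : ℕ} [NeZero L] (q1 q2 : ℤ) (C : ℝ)
    {a b : ZMod L × ZMod L} (h : torDist2 L a b = 1) (hne : a.1 ≠ b.1) :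
    cos (twisted2 L q1 q2 C b - twisted2 L q1 q2 C a) = cos (2 * π * q1 / (L : ℝ)) := by
  obtain ⟨h2, hk⟩ := torDist2_eq_one_of_fst_ne h hne
  rw [← cos_two_pi_mul_int_mul_div_of_natAbs (NeZero.ne L) q1 _ hk, ← cos_neg]
  simp only [twisted2, h2]
  push_cast
  ring_nf

def couplingWeight (L r2 : ℕ) (u : ZMod L × ZMod L → ℝ) (a b : ZMod L × ZMod L) : ℝ :=
  adjN2 L r2 a b * cos (u b - u a)

theorem jac2_eq_sub_diagonal (L : ℕ) [NeZero L] (r2 : ℕ) (u : ZMod L × ZMod L → ℝ) :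
    jac2 L r2 u = of (couplingWeight L r2 u) -
      diagonal fun a => ∑ b, couplingWeight L r2 u a b := by
  ext a b
  by_cases hab : a = b
  · subst hab
    simp [jac2, couplingWeight, adjN2_self]
  · simp [jac2, couplingWeight, hab]

theorem isHermitian_jac2 (L : ℕ) [NeZero L] (r2 : ℕ) (u : ZMod L × ZMod L → ℝ) :
    (jac2 L r2 u).IsHermitian := by
  ext a b
  rw [conjTranspose_apply, star_trivial]
  by_cases hab : a = b
  · rw [hab]
  · simp only [jac2, if_neg hab, if_neg (Ne.symm hab), adjN2_comm L r2 b a,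
      ← cos_neg (u a - u b), neg_sub]

theorem jac2_comp_swap (L : ℕ) [NeZero L] (r2 : ℕ) (u : ZMod L × ZMod L → ℝ) :
    jac2 L r2 (u ∘ Prod.swap) = (jac2 L r2 u).submatrix Prod.swap Prod.swap := by
  ext a b
  simp only [jac2, submatrix_apply, Function.comp_apply, Prod.swap_inj, adjN2_swap]
  conv_rhs => rw [← (Equiv.prodComm _ _).sum_comp]
  simp only [Equiv.prodComm_apply, adjN2_swap]

theorem dotProduct_mulVec_jac2_twisted2_comp_swap (L : ℕ) [NeZero L] (q1 q2 : ℤ) (C : ℝ)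
    (x : ZMod L × ZMod L → ℝ) :
    (x ∘ Prod.swap) ⬝ᵥ jac2 L 1 (twisted2 L q1 q2 C) *ᵥ (x ∘ Prod.swap) =
      x ⬝ᵥ jac2 L 1 (twisted2 L q2 q1 C) *ᵥ x := by
  rw [← twisted2_comp_swap L q1 q2, jac2_comp_swap, ← Equiv.coe_prodComm, submatrix_mulVec_equiv,
    ← comp_equiv_symm_dotProduct, Equiv.prodComm_symm]

theorem couplingWeight_twisted2_of_fst_ne {L : ℕ} [NeZero L] (q1 q2 : ℤ) (C : ℝ)
    {a b : ZMod L × ZMod L} (hne : a.1 ≠ b.1) :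
    couplingWeight L 1 (twisted2 L q1 q2 C) a b = adjN2 L 1 a b * cos (2 * π * q1 / (L : ℝ)) := by
  by_cases hd : torDist2 L a b = 1
  · rw [couplingWeight, cos_twisted2_sub_of_torDist2_eq_one q1 q2 C hd hne]
  · rw [couplingWeight, adjN2_one_eq_zero_of_torDist2_ne_one hd, zero_mul, zero_mul]

theorem exists_pos_dotProduct_mulVec_jac2_twisted2 {L : ℕ} [NeZero L] {q1 : ℤ} (q2 : ℤ) (C : ℝ)
    (hq1 : 2 * |q1| ≤ L) (h : L < 4 * |q1|) :
    ∃ x : ZMod L × ZMod L → ℝ, 0 < x ⬝ᵥ jac2 L 1 (twisted2 L q1 q2 C) *ᵥ x := by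
  have hL : 2 ≤ L := by have := abs_nonneg q1; omega
  have hcos := cos_two_pi_mul_div_neg hq1 h
  set S := univ.filter fun a : ZMod L × ZMod L => a.1 = 0
  have hcut : ∀ a ∈ S, ∀ b ∈ Sᶜ, couplingWeight L 1 (twisted2 L q1 q2 C) a b =
      adjN2 L 1 a b * cos (2 * π * q1 / (L : ℝ)) := by
    intro a ha b hb
    simp only [S, mem_compl, mem_filter, mem_univ, true_and] at ha hb
    exact couplingWeight_twisted2_of_fst_ne q1 q2 C (ha ▸ Ne.symm hb)
  have hcut_nonpos : ∀ a ∈ S, ∀ b ∈ Sᶜ, couplingWeight L 1 (twisted2 L q1 q2 C) a b ≤ 0 :=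
    fun a ha b hb => (hcut a ha b hb).symm ▸
      mul_nonpos_of_nonneg_of_nonpos (adjN2_nonneg L 1 a b) hcos.le
  have h00 : ((0 : ZMod L), (0 : ZMod L)) ∈ S := by simp [S]
  have h10 : ((1 : ZMod L), (0 : ZMod L)) ∈ Sᶜ := by
    simp [S, ← ZMod.val_eq_zero, ZMod.val_one'' (show L ≠ 1 by omega)]
  refine ⟨fun a => if a ∈ S then 1 else 0, ?_⟩
  rw [jac2_eq_sub_diagonal, dotProduct_mulVec_indicator_eq_neg_cut, neg_pos]
  refine sum_neg' (fun a ha => sum_nonpos (hcut_nonpos a ha)) ⟨_, h00, ?_⟩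
  refine sum_neg' (hcut_nonpos _ h00) ⟨_, h10, ?_⟩
  rwa [hcut _ h00 _ h10, adjN2_one_zero_one hL, one_mul]

/-- Nearest neighbor coupling (`r = 1`), `|q1|, |q2| ≤ ⌊L/2⌋`: if `4 max{|q1|,|q2|} > L` then the
Jacobian at the `(q1,q2)`-twisted state has a positive eigenvalue; equivalently there is `x` with
`xᵀ J x > 0` (the twisted state is linearly unstable). -/
theorem nearest_neighbor_unstable (L : ℕ) [NeZero L] (q1 q2 : ℤ) (C : ℝ)
    (hq1 : |q1| ≤ (L : ℤ) / 2) (hq2 : |q2| ≤ (L : ℤ) / 2)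
    (h : (L : ℤ) < 4 * max |q1| |q2|) :
    (∃ μ : ℝ, 0 < μ ∧ Module.End.HasEigenvalue
      (Matrix.toLin' (jac2 L 1 (twisted2 L q1 q2 C))) μ) ∧
    ∃ x : ZMod L × ZMod L → ℝ, 0 < x ⬝ᵥ (jac2 L 1 (twisted2 L q1 q2 C)).mulVec x := by
  obtain ⟨x, hx⟩ : ∃ x : ZMod L × ZMod L → ℝ,
      0 < x ⬝ᵥ jac2 L 1 (twisted2 L q1 q2 C) *ᵥ x := by
    rcases le_total |q2| |q1| with h21 | h12
    · exact exists_pos_dotProduct_mulVec_jac2_twisted2 q2 C (by omega) (max_eq_left h21 ▸ h)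
    · obtain ⟨x, hx⟩ :=
        exists_pos_dotProduct_mulVec_jac2_twisted2 q1 C (by omega) (max_eq_right h12 ▸ h)
      exact ⟨x ∘ Prod.swap, (dotProduct_mulVec_jac2_twisted2_comp_swap L q1 q2 C x).symm ▸ hx⟩
  exact ⟨(isHermitian_jac2 L 1 _).exists_hasEigenvalue_pos_of_dotProduct_mulVec_pos hx, x, hx⟩
end
end

section
/- Consider the 2D lattice Kuramoto model with coupling range r = √2 (adjacency exactly when the toroidal squared distance is 1 or 2) and the (q1,q2)-twisted state. If cos(2π q1/L) + cos(2π q2/L) + cos(2π(|q1| + |q2|)/L) < 0, then the Jacobian matrix J at the twisted state has a positive eigenvalue; equivalently, there exists x ∈ ℝ^{L²} with xᵀ J x > 0 (the twisted state is linearly unstable). -/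
/-!
At a twisted state the Jacobian is minus the weighted graph Laplacian with weight
`κ(y - x) = cos(2π(q1 δ1 + q2 δ2)/L)` on the king moves `δ = y - x`, so it is invariant under
translations. For the indicator of an additive subgroup `H` the quadratic form is therefore
`-|H| · ∑_{δ ∉ H} κ δ`. Take for `H` the diagonal `{(t, c t)}` with `c = ±1` chosen so that
`q1 - c q2 = ±(|q1| + |q2|)`: the only king moves inside `H` are `±(1, c)`, and the form equals
`-2L (cos(2πq1/L) + cos(2πq2/L) + cos(2π(|q1| + |q2|)/L)) > 0`. For `L = 2` the king moves
collapse and `H = 0` does the job instead; `L = 1` contradicts the hypothesis. Finally, a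
symmetric matrix whose quadratic form takes a positive value has a positive eigenvalue.
-/

noncomputable section
open Real Finset Matrix

theorem Matrix.IsHermitian.exists_pos_hasEigenvalue {n : Type*} [Fintype n] [DecidableEq n]
    {A : Matrix n n ℝ} (hA : A.IsHermitian) {x : n → ℝ} (hx : 0 < x ⬝ᵥ A *ᵥ x) :
    ∃ μ : ℝ, 0 < μ ∧ Module.End.HasEigenvalue (Matrix.toLin' A) μ := by
  by_contra! hA_nonpos
  have hpsd : (-A).PosSemidef := by
    refine posSemidef_iff_isHermitian_and_spectrum_nonneg.2 ⟨hA.neg, fun μ hμ => ?_⟩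
    rw [← spectrum.neg_eq, Set.mem_neg, ← spectrum_toLin',
      ← Module.End.hasEigenvalue_iff_mem_spectrum] at hμ
    by_contra! hμ_neg
    exact hA_nonpos (-μ) (by simpa using hμ_neg) hμ
  have := hpsd.dotProduct_mulVec_nonneg x
  rw [star_trivial, neg_mulVec, dotProduct_neg] at this
  linarith

section NegLaplacian

variable {ι : Type*} [Fintype ι] [DecidableEq ι]

def negLaplacian (w : ι → ι → ℝ) : Matrix ι ι ℝ :=
  fun x y => if x = y then -∑ z, w x z else w x y

theorem negLaplacian_isHermitian {w : ι → ι → ℝ} (hw : ∀ x y, w x y = w y x) :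
    (negLaplacian w).IsHermitian :=
  IsHermitian.ext fun x y => by
    by_cases h : x = y
    · subst h; rfl
    · simp [negLaplacian, h, Ne.symm h, hw]

theorem indicator_dotProduct_negLaplacian_mulVec {w : ι → ι → ℝ} (hw : ∀ x, w x x = 0)
    (S : Finset ι) :
    (fun x => if x ∈ S then (1 : ℝ) else 0) ⬝ᵥ
        negLaplacian w *ᵥ (fun x => if x ∈ S then (1 : ℝ) else 0) =
      -∑ x ∈ S, ∑ y ∈ Sᶜ, w x y := by
  have row : ∀ x ∈ S, ∑ y ∈ S, negLaplacian w x y = -∑ y ∈ Sᶜ, w x y := by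
    intro x hx
    have off_diag : ∑ y ∈ S.erase x, negLaplacian w x y = ∑ y ∈ S.erase x, w x y :=
      sum_congr rfl fun y hy => if_neg (ne_of_mem_erase hy).symm
    rw [← add_sum_erase S _ hx, off_diag, negLaplacian, if_pos rfl,
      ← sum_compl_add_sum S (w x), ← add_sum_erase S _ hx, hw]
    ring
  calc _ = ∑ x ∈ S, ∑ y ∈ S, negLaplacian w x y := by
        simp only [dotProduct, mulVec, mul_ite, ite_mul, mul_one, one_mul, mul_zero, zero_mul,
          sum_ite_mem, univ_inter]
    _ = _ := by rw [sum_congr rfl row, sum_neg_distrib]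

end NegLaplacian

instance {G : Type*} [AddGroup G] [DecidableEq G] : DecidablePred (· ∈ (⊥ : AddSubgroup G)) :=
  fun _ => decidable_of_iff _ AddSubgroup.mem_bot.symm

theorem indicator_dotProduct_negLaplacian_sub_mulVec {G : Type*} [AddCommGroup G] [Fintype G]
    [DecidableEq G] (κ : G → ℝ) (hκ : κ 0 = 0) (H : AddSubgroup G)
    [DecidablePred (· ∈ H)] :
    (fun x => if x ∈ H then (1 : ℝ) else 0) ⬝ᵥ
        negLaplacian (fun x y => κ (y - x)) *ᵥ (fun x => if x ∈ H then (1 : ℝ) else 0) =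
      -(Nat.card H * ∑ δ with δ ∉ H, κ δ) := by
  have hcut := indicator_dotProduct_negLaplacian_mulVec (w := fun x y => κ (y - x))
    (by simpa using hκ) ({x | x ∈ H} : Finset G)
  simp only [mem_filter, mem_univ, true_and, compl_filter] at hcut
  have translate : ∀ x ∈ H, ∑ y with y ∉ H, κ (y - x) = ∑ δ with δ ∉ H, κ δ :=
    fun x hx => sum_equiv (Equiv.subRight x)
      (by simp [sub_eq_add_neg, H.add_mem_cancel_right (H.neg_mem hx)]) (by simp)
  rw [hcut, sum_congr rfl fun x hx => translate x (by simpa using hx), sum_const, nsmul_eq_mul,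
    Nat.card_eq_fintype_card, Fintype.card_subtype]

section Lattice

variable {L : ℕ}

def cosZMod (L : ℕ) (a : ZMod L) : ℝ := Real.cos (2 * π * a.val / L)

theorem cosZMod_intCast [NeZero L] (m : ℤ) : cosZMod L m = Real.cos (2 * π * m / L) := by
  have hL : (L : ℝ) ≠ 0 := Nat.cast_ne_zero.2 (NeZero.ne L)
  have hm : (m : ℝ) = ((m : ZMod L).val : ℤ) + L * (m / L : ℤ) := by
    rw [ZMod.val_intCast]; exact_mod_cast (Int.emod_add_mul_ediv m L).symm
  have hangle : 2 * π * m / L = 2 * π * (m : ZMod L).val / L + (m / L : ℤ) * (2 * π) := by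
    rw [hm]; field_simp; push_cast; ring
  rw [cosZMod, hangle, Real.cos_add_int_mul_two_pi]

theorem cosZMod_neg [NeZero L] (a : ZMod L) : cosZMod L (-a) = cosZMod L a := by
  obtain ⟨m, rfl⟩ := ZMod.intCast_surjective a
  rw [← Int.cast_neg, cosZMod_intCast, cosZMod_intCast, Int.cast_neg, mul_neg, neg_div,
    Real.cos_neg]

theorem cosZMod_intCast_abs [NeZero L] (m : ℤ) : cosZMod L (|m| : ℤ) = cosZMod L m := by
  rcases abs_choice m with h | h <;> rw [h]
  rw [Int.cast_neg, cosZMod_neg]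

theorem cosZMod_one (a : ZMod 1) : cosZMod 1 a = 1 := by
  simp [cosZMod, Subsingleton.elim a 0]

theorem cos_twisted2_sub [NeZero L] (q1 q2 : ℤ) (C : ℝ) (x y : ZMod L × ZMod L) :
    Real.cos (twisted2 L q1 q2 C y - twisted2 L q1 q2 C x) =
      cosZMod L (q1 * (y.1 - x.1) + q2 * (y.2 - x.2)) := by
  have hcast : (q1 * (y.1 - x.1) + q2 * (y.2 - x.2) : ZMod L) =
      ((q1 * ((y.1.val : ℤ) - x.1.val) + q2 * ((y.2.val : ℤ) - x.2.val) : ℤ) : ZMod L) := by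
    push_cast; simp only [ZMod.natCast_val, ZMod.cast_id', id]
  rw [hcast, cosZMod_intCast, twisted2, twisted2]
  congr 1
  push_cast
  ring

def mooreNbhd (L : ℕ) : Finset (ZMod L × ZMod L) :=
  (({0, 1, -1} : Finset (ZMod L)) ×ˢ {0, 1, -1}).erase 0

theorem natAbs_valMinAbs_sub [NeZero L] (a b : ZMod L) :
    (b - a).valMinAbs.natAbs =
      min ((a.val : ℤ) - b.val).natAbs (L - ((a.val : ℤ) - b.val).natAbs) := by
  wlog h : a.val ≤ b.val generalizing a b
  · rw [← neg_sub, ZMod.natAbs_valMinAbs_neg, this b a (by omega), ← Int.natAbs_neg, neg_sub]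
  rw [ZMod.valMinAbs_natAbs_eq_min, ZMod.val_sub h]
  omega

theorem torDist2_eq [NeZero L] (x y : ZMod L × ZMod L) :
    torDist2 L x y = (y.1 - x.1).valMinAbs.natAbs ^ 2 + (y.2 - x.2).valMinAbs.natAbs ^ 2 := by
  rw [torDist2, natAbs_valMinAbs_sub, natAbs_valMinAbs_sub]

theorem natAbs_valMinAbs_le_one_iff [NeZero L] (a : ZMod L) :
    a.valMinAbs.natAbs ≤ 1 ↔ a ∈ ({0, 1, -1} : Finset (ZMod L)) := by
  constructor
  · intro ha
    rw [← ZMod.coe_valMinAbs a]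
    rcases (by omega : a.valMinAbs = 0 ∨ a.valMinAbs = 1 ∨ a.valMinAbs = -1) with h | h | h <;>
      simp [h]
  · have hone : (1 : ZMod L).valMinAbs.natAbs ≤ 1 := by
      rw [ZMod.valMinAbs_natAbs_eq_min]
      exact (min_le_left _ _).trans (ZMod.val_one_eq_one_mod L ▸ Nat.mod_le 1 L)
    simp only [mem_insert, mem_singleton]
    rintro (rfl | rfl | rfl) <;> simp [hone]

theorem sq_add_sq_mem_Ioc_two_iff (k l : ℕ) :
    (0 < k ^ 2 + l ^ 2 ∧ k ^ 2 + l ^ 2 ≤ 2) ↔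
      (k ≤ 1 ∧ l ≤ 1) ∧ ¬(k = 0 ∧ l = 0) := by
  rcases k with _ | _ | k <;> rcases l with _ | _ | l <;> simp <;> ring_nf <;> omega

theorem adjN2_two_eq [NeZero L] (x y : ZMod L × ZMod L) :
    adjN2 L 2 x y = if y - x ∈ mooreNbhd L then 1 else 0 := by
  refine if_congr ?_ rfl rfl
  rw [torDist2_eq, sq_add_sq_mem_Ioc_two_iff, natAbs_valMinAbs_le_one_iff,
    natAbs_valMinAbs_le_one_iff, mooreNbhd, mem_erase, mem_product]
  simp only [Int.natAbs_eq_zero, ZMod.valMinAbs_eq_zero, ne_eq, Prod.ext_iff, Prod.fst_sub,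
    Prod.snd_sub, Prod.fst_zero, Prod.snd_zero]
  tauto

def twistedCoupling (L : ℕ) (p1 p2 : ZMod L) (δ : ZMod L × ZMod L) : ℝ :=
  if δ ∈ mooreNbhd L then cosZMod L (p1 * δ.1 + p2 * δ.2) else 0

theorem jac2_two_twisted2 [NeZero L] (q1 q2 : ℤ) (C : ℝ) :
    jac2 L 2 (twisted2 L q1 q2 C) = negLaplacian fun x y => twistedCoupling L q1 q2 (y - x) := by
  have hw : (fun x y => adjN2 L 2 x y * Real.cos (twisted2 L q1 q2 C y - twisted2 L q1 q2 C x)) =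
      fun x y => twistedCoupling L q1 q2 (y - x) := by
    funext x y
    rw [adjN2_two_eq, cos_twisted2_sub, twistedCoupling]
    split_ifs <;> simp
  rw [← hw]
  rfl

theorem twistedCoupling_zero (p1 p2 : ZMod L) : twistedCoupling L p1 p2 0 = 0 := by
  simp [twistedCoupling, mooreNbhd]

theorem neg_mem_mooreNbhd {δ : ZMod L × ZMod L} : -δ ∈ mooreNbhd L ↔ δ ∈ mooreNbhd L := by
  simp only [mooreNbhd, mem_erase, mem_product, mem_insert, mem_singleton, ne_eq,
    Prod.fst_neg, Prod.snd_neg, neg_eq_iff_eq_neg, neg_neg, neg_zero]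
  tauto

theorem twistedCoupling_neg [NeZero L] (p1 p2 : ZMod L) (δ : ZMod L × ZMod L) :
    twistedCoupling L p1 p2 (-δ) = twistedCoupling L p1 p2 δ := by
  simp only [twistedCoupling, neg_mem_mooreNbhd, Prod.fst_neg, Prod.snd_neg, mul_neg,
    ← neg_add, cosZMod_neg]

theorem jac2_two_twisted2_isHermitian [NeZero L] (q1 q2 : ℤ) (C : ℝ) :
    (jac2 L 2 (twisted2 L q1 q2 C)).IsHermitian := by
  rw [jac2_two_twisted2]
  exact negLaplacian_isHermitian fun x y => by rw [← neg_sub, twistedCoupling_neg]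

def lineSubgroup (c : ZMod L) : AddSubgroup (ZMod L × ZMod L) :=
  ((AddMonoidHom.id _).prod (AddMonoidHom.mulLeft c)).range

theorem mem_lineSubgroup {c : ZMod L} {δ : ZMod L × ZMod L} :
    δ ∈ lineSubgroup c ↔ δ.2 = c * δ.1 := by
  constructor
  · rintro ⟨t, rfl⟩
    rfl
  · intro h
    exact ⟨δ.1, Prod.ext rfl h.symm⟩

instance (c : ZMod L) : DecidablePred (· ∈ lineSubgroup c) :=
  fun _ => decidable_of_iff _ mem_lineSubgroup.symm

theorem card_lineSubgroup (c : ZMod L) : Nat.card (lineSubgroup c) = L := by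
  have hinj : Function.Injective ((AddMonoidHom.id (ZMod L)).prod (AddMonoidHom.mulLeft c)) :=
    fun s t h => congrArg Prod.fst h
  rw [lineSubgroup, ← Nat.card_congr (AddMonoidHom.ofInjective hinj).toEquiv, Nat.card_zmod]

theorem sum_twistedCoupling_not_mem_lineSubgroup [NeZero L] (hL : 3 ≤ L) (p1 p2 : ZMod L)
    {c : ZMod L} (hc : c = 1 ∨ c = -1) :
    ∑ δ with δ ∉ lineSubgroup c, twistedCoupling L p1 p2 δ =
      2 * (cosZMod L p1 + cosZMod L p2 + cosZMod L (p1 - c * p2)) := by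
  have : Fact (2 < L) := ⟨hL⟩
  have : Fact (1 < L) := ⟨by omega⟩
  have h10 : (1 : ZMod L) ≠ 0 := one_ne_zero
  have hm0 : (-1 : ZMod L) ≠ 0 := neg_ne_zero.2 one_ne_zero
  have hm1 : (-1 : ZMod L) ≠ 1 := ZMod.neg_one_ne_one
  set U : Finset (ZMod L) := {0, 1, -1}
  rw [sum_filter, ← sum_subset (subset_univ (U ×ˢ U)) fun δ _ hδ => ?_]
  · rw [sum_product]
    rcases hc with rfl | rfl <;>
      simp [U, twistedCoupling, mooreNbhd, mem_lineSubgroup, h10, hm0, hm1, h10.symm, hm0.symm,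
        hm1.symm, cosZMod_neg]
    · rw [show -p1 + p2 = -(p1 + -p2) by ring, cosZMod_neg, ← sub_eq_add_neg]; ring
    · rw [show -p1 + -p2 = -(p1 + p2) by ring, cosZMod_neg]; ring
  · have : δ ∉ mooreNbhd L := fun h => hδ (mem_of_mem_erase h)
    simp [twistedCoupling, this]

theorem sum_twistedCoupling_two_not_mem_bot (p1 p2 : ZMod 2) {c : ZMod 2}
    (hc : c = 1 ∨ c = -1) :
    ∑ δ with δ ∉ (⊥ : AddSubgroup (ZMod 2 × ZMod 2)), twistedCoupling 2 p1 p2 δ =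
      cosZMod 2 p1 + cosZMod 2 p2 + cosZMod 2 (p1 - c * p2) := by
  have hc : c = 1 := by rcases hc with rfl | rfl <;> decide
  have hsupp : ({δ | δ ∉ (⊥ : AddSubgroup (ZMod 2 × ZMod 2))} : Finset _) =
      {(1, 0), (0, 1), (1, 1)} := by decide
  rw [hsupp, sum_insert (by decide), sum_insert (by decide), sum_singleton, hc]
  have hmem : (1, 0) ∈ mooreNbhd 2 ∧ (0, 1) ∈ mooreNbhd 2 ∧ (1, 1) ∈ mooreNbhd 2 := by
    decide
  simp only [twistedCoupling, hmem, if_true, mul_one, mul_zero, add_zero, zero_add]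
  rw [one_mul, sub_eq_add_neg, ZMod.neg_eq_self_mod_two, add_assoc]

theorem exists_pos_dotProduct_jac2_two_twisted2 [NeZero L] (hL : 2 ≤ L) (q1 q2 : ℤ) (C : ℝ)
    {c : ZMod L} (hc : c = 1 ∨ c = -1)
    (hneg : cosZMod L q1 + cosZMod L q2 + cosZMod L (q1 - c * q2) < 0) :
    ∃ x, 0 < x ⬝ᵥ jac2 L 2 (twisted2 L q1 q2 C) *ᵥ x := by
  rw [jac2_two_twisted2]
  rcases hL.eq_or_lt with rfl | hL3
  · refine ⟨fun x => if x ∈ (⊥ : AddSubgroup _) then 1 else 0, ?_⟩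
    rw [indicator_dotProduct_negLaplacian_sub_mulVec (twistedCoupling 2 q1 q2)
        (twistedCoupling_zero _ _) ⊥,
      AddSubgroup.card_bot, sum_twistedCoupling_two_not_mem_bot _ _ hc, Nat.cast_one, one_mul]
    linarith
  · refine ⟨fun x => if x ∈ lineSubgroup c then 1 else 0, ?_⟩
    rw [indicator_dotProduct_negLaplacian_sub_mulVec (twistedCoupling L q1 q2)
        (twistedCoupling_zero _ _) _,
      card_lineSubgroup, sum_twistedCoupling_not_mem_lineSubgroup hL3 _ _ hc]
    have : (0 : ℝ) < L := by positivity
    nlinarith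

end Lattice

theorem Int.exists_abs_sub_mul_eq_abs_add_abs (a b : ℤ) :
    ∃ c : ℤ, (c = 1 ∨ c = -1) ∧ |a - c * b| = |a| + |b| := by
  by_cases hsign : (0 ≤ a ∧ 0 ≤ b) ∨ (a ≤ 0 ∧ b ≤ 0)
  · refine ⟨-1, .inr rfl, ?_⟩
    rw [neg_one_mul, sub_neg_eq_add, abs_add_eq_add_abs_iff]
    exact hsign
  · refine ⟨1, .inl rfl, ?_⟩
    rw [one_mul, sub_eq_add_neg, ← abs_neg b, abs_add_eq_add_abs_iff]
    omega

/-- Coupling range `r = √2`: if `cos(2πq1/L) + cos(2πq2/L) + cos(2π(|q1|+|q2|)/L) < 0` then the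
Jacobian at the `(q1,q2)`-twisted state has a positive eigenvalue; equivalently there is `x` with
`xᵀ J x > 0` (the twisted state is linearly unstable). -/
theorem diagonal_coupling_unstable (L : ℕ) [NeZero L] (q1 q2 : ℤ) (C : ℝ)
    (h : Real.cos (2 * π * q1 / L) + Real.cos (2 * π * q2 / L)
        + Real.cos (2 * π * ((|q1| + |q2| : ℤ) : ℝ) / L) < 0) :
    (∃ μ : ℝ, 0 < μ ∧ Module.End.HasEigenvalue
      (Matrix.toLin' (jac2 L 2 (twisted2 L q1 q2 C))) μ) ∧
    ∃ x : ZMod L × ZMod L → ℝ, 0 < x ⬝ᵥ (jac2 L 2 (twisted2 L q1 q2 C)).mulVec x := by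
  obtain ⟨c, hc, habs⟩ := Int.exists_abs_sub_mul_eq_abs_add_abs q1 q2
  have hc' : (c : ZMod L) = 1 ∨ (c : ZMod L) = -1 := by rcases hc with rfl | rfl <;> simp
  have hneg : cosZMod L q1 + cosZMod L q2 + cosZMod L (q1 - c * q2) < 0 := by
    rwa [← habs, ← cosZMod_intCast, ← cosZMod_intCast, ← cosZMod_intCast,
      cosZMod_intCast_abs, Int.cast_sub, Int.cast_mul] at h
  have hL : 2 ≤ L := by
    by_contra! hL
    obtain rfl : L = 1 := by have := NeZero.ne L; omega
    simp only [cosZMod_one] at hneg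
    norm_num at hneg
  obtain ⟨x, hx⟩ := exists_pos_dotProduct_jac2_two_twisted2 hL q1 q2 C hc' hneg
  exact ⟨(jac2_two_twisted2_isHermitian q1 q2 C).exists_pos_hasEigenvalue hx, x, hx⟩
end
end
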